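/- Let w ∈ ℝ^n be a τ-regular vector with Σ_i |w^{(i)}|² = 1, let γ ∈ (0,1], and let z_1,…,z_n be i.i.d. {0,1}-valued random variables with Pr[z_i = 1] = γ. Then Pr[ Σ_{i=1}^{n} (w^{(i)})²·z_i ≥ γ/2 ] ≥ 1 − 2·e^{−γ²/(2τ²)}. -/

import Mathlib

/-!
The sum `∑ wᵢ² zᵢ` has mean `γ ∑ wᵢ² = γ` and is a sum of independent terms, the `i`-th ranging
in `[0, wᵢ²]`. Hoeffding's inequality bounds the probability that it drops to `γ / 2` by
`exp (-γ² / (2 ∑ wᵢ⁴))`, and regularity gives `∑ wᵢ⁴ ≤ τ² ∑ wᵢ² = τ²`.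
-/

open MeasureTheory
open scoped ENNReal

noncomputable section

/-- The real value (0 or 1) of a bit. -/
def bval (b : Bool) : ℝ := if b then 1 else 0

/-- The distribution of a biased coin on `Bool` with probability `p` of `true`. -/
def coin (p : ℝ) : Measure Bool :=
  (PMF.bernoulli (min (Real.toNNReal p) 1) (min_le_right _ _)).toMeasure

open ProbabilityTheory Real

section Hoeffding

variable {Ω ι : Type*} {mΩ : MeasurableSpace Ω} {μ : Measure Ω} [IsProbabilityMeasure μ]
  {X : ι → Ω → ℝ}

/-- Hoeffding's lemma makes each `μ[X i] - X i` sub-Gaussian with parameter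
`((b i - a i) / 2)²`. -/
theorem measureReal_sum_le_sub_le_of_mem_Icc (h_indep : iIndepFun X μ)
    (hm : ∀ i, AEMeasurable (X i) μ) {a b : ι → ℝ}
    (hb : ∀ i, ∀ᵐ ω ∂μ, X i ω ∈ Set.Icc (a i) (b i)) (s : Finset ι) {ε : ℝ} (hε : 0 ≤ ε) :
    μ.real {ω | ∑ i ∈ s, X i ω ≤ ∑ i ∈ s, μ[X i] - ε} ≤
      exp (-2 * ε ^ 2 / ∑ i ∈ s, (b i - a i) ^ 2) := by
  have h_subG : ∀ i ∈ s,
      HasSubgaussianMGF (fun ω ↦ μ[X i] - X i ω) ((‖b i - a i‖₊ / 2) ^ 2) μ := fun i _ ↦ by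
    convert (hasSubgaussianMGF_of_mem_Icc (hm i) (hb i)).neg using 1
    ext ω
    simp
  have h_indep' : iIndepFun (fun i ω ↦ μ[X i] - X i ω) μ :=
    h_indep.comp (fun i x ↦ ∫ ω, X i ω ∂μ - x) fun _ ↦ measurable_const.sub measurable_id
  have h_set : {ω | ∑ i ∈ s, X i ω ≤ ∑ i ∈ s, μ[X i] - ε} =
      {ω | ε ≤ ∑ i ∈ s, (μ[X i] - X i ω)} := by
    ext ω
    simp only [Set.mem_ofPred_eq, Finset.sum_sub_distrib]
    constructor <;> intro h <;> linarith
  have h_var : ((∑ i ∈ s, (‖b i - a i‖₊ / 2) ^ 2 : NNReal) : ℝ) =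
      (∑ i ∈ s, (b i - a i) ^ 2) / 4 := by
    simp only [NNReal.coe_sum, NNReal.coe_pow, NNReal.coe_div, coe_nnnorm, Real.norm_eq_abs,
      sq_abs, div_pow, Finset.sum_div]
    norm_num
  rw [h_set]
  refine (HasSubgaussianMGF.measure_sum_ge_le_of_iIndepFun h_indep' h_subG hε).trans_eq ?_
  rw [h_var]
  ring_nf

end Hoeffding

instance (p : ℝ) : IsProbabilityMeasure (coin p) := PMF.toMeasure.isProbabilityMeasure _

theorem coin_real_singleton {p : ℝ} (hp0 : 0 ≤ p) (hp1 : p ≤ 1) (b : Bool) :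
    (coin p).real {b} = if b then p else 1 - p := by
  rw [measureReal_def, coin, PMF.toMeasure_apply_singleton _ b (measurableSet_singleton b)]
  cases b <;> simp [PMF.bernoulli_apply, hp0, hp1]

theorem integral_bval_coin {p : ℝ} (hp0 : 0 ≤ p) (hp1 : p ≤ 1) :
    ∫ b, bval b ∂coin p = p := by
  simp [integral_fintype, coin_real_singleton hp0 hp1, bval]

theorem bval_mem_Icc (b : Bool) : bval b ∈ Set.Icc 0 1 := by
  cases b <;> simp [bval]

theorem measureReal_sum_mul_bval_le_sub_le {ι : Type*} [Fintype ι] {p : ℝ} (hp0 : 0 ≤ p)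
    (hp1 : p ≤ 1) {a : ι → ℝ} (ha : ∀ i, 0 ≤ a i) {ε : ℝ} (hε : 0 ≤ ε) :
    (Measure.pi fun _ : ι ↦ coin p).real {z | ∑ i, a i * bval (z i) ≤ p * ∑ i, a i - ε} ≤
      exp (-2 * ε ^ 2 / ∑ i, a i ^ 2) := by
  set μ := Measure.pi fun _ : ι ↦ coin p
  have h_indep : iIndepFun (fun i (z : ι → Bool) ↦ a i * bval (z i)) μ :=
    iIndepFun_pi (X := fun i b ↦ a i * bval b) fun _ ↦ Measurable.of_discrete.aemeasurable
  have h_mean : ∀ i, ∫ z, a i * bval (z i) ∂μ = p * a i := fun i ↦ by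
    rw [integral_comp_eval (μ := fun _ : ι ↦ coin p) (f := fun b ↦ a i * bval b)
      Measurable.of_discrete.aestronglyMeasurable, integral_const_mul,
      integral_bval_coin hp0 hp1, mul_comm]
  have h_range : ∀ i, ∀ᵐ z ∂μ, a i * bval (z i) ∈ Set.Icc 0 (a i) := fun i ↦
    ae_of_all _ fun z ↦ ⟨mul_nonneg (ha i) (bval_mem_Icc _).1,
      mul_le_of_le_one_right (ha i) (bval_mem_Icc _).2⟩
  simpa [h_mean, Finset.mul_sum] using measureReal_sum_le_sub_le_of_mem_Icc h_indep
    (fun _ ↦ Measurable.of_discrete.aemeasurable) h_range Finset.univ hε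

theorem sum_sq_sq_le_of_abs_le {ι : Type*} (s : Finset ι) {w : ι → ℝ} {τ : ℝ}
    (hw : ∀ i ∈ s, |w i| ≤ τ) : ∑ i ∈ s, (w i ^ 2) ^ 2 ≤ τ ^ 2 * ∑ i ∈ s, w i ^ 2 := by
  rw [Finset.mul_sum]
  refine Finset.sum_le_sum fun i hi ↦ ?_
  rw [sq (w i ^ 2)]
  exact mul_le_mul_of_nonneg_right (sq_le_sq' (neg_le_of_abs_le (hw i hi))
    (le_of_abs_le (hw i hi))) (sq_nonneg _)

theorem measureReal_sum_sq_mul_bval_le_half_le {ι : Type*} [Fintype ι] {p τ : ℝ} (hp0 : 0 ≤ p)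
    (hp1 : p ≤ 1) {w : ι → ℝ} (hw : ∑ i, w i ^ 2 = 1) (hτ : ∀ i, |w i| ≤ τ) :
    (Measure.pi fun _ : ι ↦ coin p).real {z | ∑ i, w i ^ 2 * bval (z i) ≤ p / 2} ≤
      exp (-(p ^ 2) / (2 * τ ^ 2)) := by
  obtain ⟨j, hj⟩ : ∃ j, w j ≠ 0 := by
    by_contra! h
    simp [h] at hw
  have hw4_pos : 0 < ∑ i, (w i ^ 2) ^ 2 :=
    Finset.sum_pos' (fun _ _ ↦ by positivity) ⟨j, Finset.mem_univ _, by positivity⟩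
  have hw4_le : ∑ i, (w i ^ 2) ^ 2 ≤ τ ^ 2 := by
    simpa [hw] using sum_sq_sq_le_of_abs_le Finset.univ fun i _ ↦ hτ i
  have h := measureReal_sum_mul_bval_le_sub_le hp0 hp1 (fun i ↦ sq_nonneg (w i)) (ε := p / 2)
    (by positivity)
  rw [hw, mul_one, sub_half] at h
  refine h.trans (exp_le_exp.mpr ?_)
  calc -2 * (p / 2) ^ 2 / ∑ i, (w i ^ 2) ^ 2 = -(p ^ 2 / (2 * ∑ i, (w i ^ 2) ^ 2)) := by ring
    _ ≤ -(p ^ 2 / (2 * τ ^ 2)) := by gcongr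
    _ = -(p ^ 2) / (2 * τ ^ 2) := by ring

theorem stmt_17 (n : ℕ) (τ γ : ℝ) (hγ0 : 0 < γ) (hγ1 : γ ≤ 1)
    (w : Fin n → ℝ)
    (hreg : ∀ i, |w i| ≤ τ * Real.sqrt (∑ j, (w j) ^ 2))
    (hnorm : ∑ i, (w i) ^ 2 = 1) :
    1 - 2 * Real.exp (-(γ ^ 2) / (2 * τ ^ 2)) ≤
      ((Measure.pi fun _ : Fin n => coin γ)
        {z | γ / 2 ≤ ∑ i, (w i) ^ 2 * bval (z i)}).toReal := by
  set μ := Measure.pi fun _ : Fin n ↦ coin γ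
  have h_tail := measureReal_sum_sq_mul_bval_le_half_le hγ0.le hγ1 hnorm fun i ↦ by
    simpa [hnorm] using hreg i
  set S := {z : Fin n → Bool | γ / 2 ≤ ∑ i, w i ^ 2 * bval (z i)}
  have h_compl : μ.real Sᶜ ≤ μ.real {z | ∑ i, w i ^ 2 * bval (z i) ≤ γ / 2} :=
    measureReal_mono fun _ hz ↦ (not_le.mp (Set.notMem_ofPred_iff.mp hz)).le
  have h_S := probReal_compl_eq_one_sub (μ := μ) (Set.toFinite S).measurableSet
  rw [← measureReal_def]
  linarith [exp_pos (-(γ ^ 2) / (2 * τ ^ 2))]
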